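/- In a Schreier system (M, A, Θ, λ), for every invertible element a of the monoid M, the group A_a is abelian. -/
import Mathlib


/-- Transport along an equality of indices of an indexed family. -/
def fcast {M : Type*} (A : M → Type*) {x y : M} (h : x = y) (v : A x) : A y := h ▸ v

section aux
variable {M : Type*} (A : M → Type*)

lemma fcast_comp {x y z : M} (h1 : x = y) (h2 : y = z) (v : A x) :
    fcast A h2 (fcast A h1 v) = fcast A (h1.trans h2) v := by subst h1; subst h2; rfl

lemma fcast_mul [∀ a : M, Group (A a)] {x y : M} (h : x = y) (u v : A x) :
    fcast A h (u * v) = fcast A h u * fcast A h v := by subst h; rfl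

lemma fcast_inj {x y : M} (h : x = y) {u v : A x}
    (he : fcast A h u = fcast A h v) : u = v := by subst h; exact he

lemma pull_tr [Monoid M] [∀ a : M, Group (A a)] (pull : ∀ a b : M, A a →* A (a * b))
    (a : M) {x y : M} (h : x = y) (g : A a) :
    pull a y g = fcast A (by rw [h]) (pull a x g) := by subst h; rfl

lemma push_tr [Monoid M] [∀ a : M, Group (A a)] (push : ∀ a b : M, A b →* A (a * b))
    (a : M) {x y : M} (h : x = y) (g : A a) :
    push y a g = fcast A (by rw [h]) (push x a g) := by subst h; rfl

end aux

/-- In a Schreier system `(M, A, Θ, λ)` (a non-abelian 3-cocycle on the monoid `M`),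
for every invertible element `a` of `M` the group `A a` is abelian. -/
theorem stmt4 {M : Type*} [Monoid M] (A : M → Type*) [∀ a : M, Group (A a)]
    (push : ∀ a b : M, A b →* A (a * b))   -- `a_* : A_b → A_{ab}`
    (pull : ∀ a b : M, A a →* A (a * b))   -- `b^* : A_a → A_{ab}`
    (lam : ∀ a b c : M, A (a * b * c))
    (hc11 : ∀ (a b c : M) (f : A c),
      lam a b c * push (a * b) c f * (lam a b c)⁻¹
        = fcast A (mul_assoc a b c).symm (push a (b * c) (push b c f)))
    (hc12 : ∀ (a b c : M) (g : A b),
      lam a b c * pull (a * b) c (push a b g) * (lam a b c)⁻¹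
        = fcast A (mul_assoc a b c).symm (push a (b * c) (pull b c g)))
    (hc13 : ∀ (a b c : M) (h : A a),
      lam a b c * pull (a * b) c (pull a b h) * (lam a b c)⁻¹
        = fcast A (mul_assoc a b c).symm (pull a (b * c) h))
    (hc2 : ∀ a b c d : M,
      fcast A (show a * (b * c * d) = a * b * c * d by simp [mul_assoc])
          (push a (b * c * d) (lam b c d))
        * fcast A (show a * (b * c) * d = a * b * c * d by simp [mul_assoc])
          (lam a (b * c) d)
        * pull (a * b * c) d (lam a b c)
      = fcast A (show a * b * (c * d) = a * b * c * d by simp [mul_assoc])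
          (lam a b (c * d))
        * lam (a * b) c d)
    (hc3 : ∀ (a b : M) (f : A b) (g : A a),
      push a b f * pull a b g = pull a b g * push a b f)
    (hc4p : ∀ (a : M) (f : A a), push 1 a f = fcast A (one_mul a).symm f)
    (hc4q : ∀ (a : M) (f : A a), pull a 1 f = fcast A (mul_one a).symm f)
    (hc5a : ∀ a b : M, lam 1 a b = 1)
    (hc5b : ∀ a b : M, lam a 1 b = 1)
    (hc5c : ∀ a b : M, lam a b 1 = 1) :
    ∀ a : M, IsUnit a → ∀ f g : A a, f * g = g * f := by
  intro a ha
  obtain ⟨b, hab, hba⟩ : ∃ b : M, a * b = 1 ∧ b * a = 1 := by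
    obtain ⟨u, rfl⟩ := ha
    exact ⟨(u⁻¹ : Mˣ), u.mul_inv, u.inv_mul⟩
  have E2 : a = a * b * a := by rw [hab, one_mul]
  have hpull : ∀ g : A a, pull a (b * a) g
      = fcast A (mul_assoc a b a) (fcast A E2 g) := by
    intro g
    rw [pull_tr A pull a hba.symm g, hc4q, fcast_comp, fcast_comp]
  have hpush : ∀ f : A a, push a (b * a) (push b a f)
      = fcast A (mul_assoc a b a) (lam a b a * fcast A E2 f * (lam a b a)⁻¹) := by
    intro f
    have h2 : push (a * b) a f = fcast A E2 f := by
      rw [push_tr A push a hab.symm f, hc4p, fcast_comp]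
    rw [← h2, hc11 a b a f, fcast_comp]
    rfl
  have key : ∀ f g : A a,
      (lam a b a * fcast A E2 f * (lam a b a)⁻¹) * fcast A E2 g
        = fcast A E2 g * (lam a b a * fcast A E2 f * (lam a b a)⁻¹) := by
    intro f g
    have h3 := hc3 a (b * a) (push b a f) g
    rw [hpull, hpush, ← fcast_mul, ← fcast_mul] at h3
    exact fcast_inj A (mul_assoc a b a) h3
  have key2 : ∀ f g : A a, fcast A E2 f * fcast A E2 g = fcast A E2 g * fcast A E2 f := by
    intro f g
    have h4 := key (fcast A E2.symm ((lam a b a)⁻¹ * fcast A E2 f * lam a b a)) g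
    have h5 : fcast A E2 (fcast A E2.symm ((lam a b a)⁻¹ * fcast A E2 f * lam a b a))
        = (lam a b a)⁻¹ * fcast A E2 f * lam a b a := by
      rw [fcast_comp]
      rfl
    rw [h5] at h4
    have h6 : lam a b a * ((lam a b a)⁻¹ * fcast A E2 f * lam a b a) * (lam a b a)⁻¹
        = fcast A E2 f := by group
    rw [h6] at h4
    exact h4
  intro f g
  apply fcast_inj A E2
  rw [fcast_mul, fcast_mul]
  exact key2 f g
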